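/- arXiv:2208.05287 — 2 statements merged into one kernel-verified Lean document; each statement's English description precedes it below -/
import Mathlib

section
/- (One-step contraction for GraDS.) Assume each f_i is convex and L-smooth (L > 0) and f is μ-strongly convex with minimizer x*. Fix x ∈ E and assume H_s(x) ≠ 0 for every minibatch s, and that γmin > 0 satisfies μ·γmin ≤ L and γ^GraDS_s(x) ≥ γmin for every minibatch s. Then the average over all N^n minibatches s of ‖x − (1/L)·γ^GraDS_s(x)·H_s(x) − x*‖² is at most (1 − γmin·μ/L)·‖x − x*‖². -/
open scoped BigOperators RealInnerProductSpace

section Helpers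

open Set

variable {F : Type*} [NormedAddCommGroup F] [InnerProductSpace ℝ F] [CompleteSpace F]

lemma line_hasDerivAt (g : F → ℝ) (hg : Differentiable ℝ g) (p v : F) (t : ℝ) :
    HasDerivAt (fun t : ℝ => g (p + t • v)) ⟪gradient g (p + t • v), v⟫ t := by
  have h1 : HasDerivAt (fun t : ℝ => p + t • v) v t := by
    simpa using ((hasDerivAt_id t).smul_const v).const_add p
  have h2 := (hg (p + t • v)).hasGradientAt
  rw [hasGradientAt_iff_hasFDerivAt] at h2
  simpa [InnerProductSpace.toDual_apply_apply, Function.comp_def] using h2.comp_hasDerivAt t h1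

lemma convex_first_order (g : F → ℝ) (hg : Differentiable ℝ g)
    (hc : ConvexOn ℝ Set.univ g) (a b : F) :
    g a + ⟪gradient g a, b - a⟫ ≤ g b := by
  set v := b - a with hv
  have hφc : ConvexOn ℝ Set.univ (fun t : ℝ => g (a + t • v)) := by
    have := hc.comp_affineMap (AffineMap.lineMap a b : ℝ →ᵃ[ℝ] F)
    simp only [Set.preimage_univ] at this
    have heq : (fun t : ℝ => g (a + t • v)) = g ∘ AffineMap.lineMap a b := by
      funext t
      simp [AffineMap.lineMap_apply, hv, add_comm]
    rw [heq]
    exact this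
  have hd : HasDerivAt (fun t : ℝ => g (a + t • v)) ⟪gradient g a, v⟫ 0 := by
    simpa using line_hasDerivAt g hg a v 0
  have := hφc.le_slope_of_hasDerivAt (mem_univ (0:ℝ)) (mem_univ (1:ℝ)) one_pos hd
  simp only [slope_def_field] at this
  have hb : a + (1:ℝ) • v = b := by simp [hv]
  rw [hb] at this
  simp only [zero_smul, add_zero, sub_zero, div_one] at this
  linarith

lemma descent_lemma (g : F → ℝ) (hg : Differentiable ℝ g) (L : ℝ) (hL : 0 < L)
    (hlip : ∀ x y, ‖gradient g x - gradient g y‖ ≤ L * ‖x - y‖) (a b : F) :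
    g b ≤ g a + ⟪gradient g a, b - a⟫ + L / 2 * ‖b - a‖ ^ 2 := by
  set v := b - a with hv
  set ψ : ℝ → ℝ := fun t => g (a + t • v) - t * ⟪gradient g a, v⟫ - L * t ^ 2 / 2 * ‖v‖ ^ 2
    with hψ
  have hder : ∀ t : ℝ, HasDerivAt ψ
      (⟪gradient g (a + t • v), v⟫ - ⟪gradient g a, v⟫ - L * t * ‖v‖ ^ 2) t := by
    intro t
    have h1 := line_hasDerivAt g hg a v t
    have h2 : HasDerivAt (fun t : ℝ => t * ⟪gradient g a, v⟫) ⟪gradient g a, v⟫ t := by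
      simpa using (hasDerivAt_id t).mul_const ⟪gradient g a, v⟫
    have h3 : HasDerivAt (fun t : ℝ => L * t ^ 2 / 2 * ‖v‖ ^ 2) (L * t * ‖v‖ ^ 2) t := by
      have : HasDerivAt (fun t : ℝ => t ^ 2) (2 * t) t := by
        simpa using hasDerivAt_pow 2 t
      have := ((this.const_mul L).div_const 2).mul_const (‖v‖ ^ 2)
      exact this.congr_deriv (by ring)
    exact (h1.sub h2).sub h3
  have hnonpos : ∀ t ∈ interior (Icc (0:ℝ) 1), deriv ψ t ≤ 0 := by
    intro t ht
    rw [interior_Icc] at ht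
    rw [(hder t).deriv]
    have h1 : ⟪gradient g (a + t • v) - gradient g a, v⟫ ≤ L * t * ‖v‖ ^ 2 := by
      calc ⟪gradient g (a + t • v) - gradient g a, v⟫
          ≤ ‖gradient g (a + t • v) - gradient g a‖ * ‖v‖ := real_inner_le_norm _ _
        _ ≤ (L * ‖(a + t • v) - a‖) * ‖v‖ := by
            gcongr; exact hlip _ _
        _ = L * (|t| * ‖v‖) * ‖v‖ := by simp [norm_smul]
        _ = L * t * ‖v‖ ^ 2 := by
            rw [abs_of_pos ht.1]; ring
    rw [inner_sub_left] at h1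
    linarith
  have hcont : ContinuousOn ψ (Icc 0 1) := fun t _ => ((hder t).continuousAt).continuousWithinAt
  have hdiff : DifferentiableOn ℝ ψ (interior (Icc (0:ℝ) 1)) :=
    fun t _ => ((hder t).differentiableAt).differentiableWithinAt
  have hanti := antitoneOn_of_deriv_nonpos (convex_Icc (0:ℝ) 1) hcont hdiff hnonpos
  have h10 := hanti (left_mem_Icc.2 zero_le_one) (right_mem_Icc.2 zero_le_one) zero_le_one
  have hb : a + (1:ℝ) • v = b := by simp [hv]
  simp only [hψ, hb, zero_smul, add_zero, one_pow, zero_pow, mul_zero, zero_mul,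
    mul_one, sub_zero, zero_div] at h10
  linarith

lemma coco_half (g : F → ℝ) (hg : Differentiable ℝ g) (hc : ConvexOn ℝ Set.univ g)
    (L : ℝ) (hL : 0 < L)
    (hlip : ∀ x y, ‖gradient g x - gradient g y‖ ≤ L * ‖x - y‖) (a b : F) :
    (1 / (2 * L)) * ‖gradient g a - gradient g b‖ ^ 2
      ≤ g a - g b - ⟪gradient g b, a - b⟫ := by
  set u := gradient g a - gradient g b with hu
  set w := a - L⁻¹ • u with hw
  have hd := descent_lemma g hg L hL hlip a w
  have hcx := convex_first_order g hg hc b w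
  have hwa : w - a = -(L⁻¹ • u) := by rw [hw]; abel
  have hwb : w - b = (a - b) - L⁻¹ • u := by rw [hw]; abel
  rw [hwa] at hd
  rw [hwb] at hcx
  simp only [inner_neg_right, real_inner_smul_right, norm_neg, norm_smul,
    inner_sub_right] at hd hcx
  have huu : ⟪gradient g a, u⟫ - ⟪gradient g b, u⟫ = ‖u‖ ^ 2 := by
    rw [← inner_sub_left, ← hu, real_inner_self_eq_norm_sq]
  have hLinv : ‖L⁻¹‖ = L⁻¹ := by
    rw [Real.norm_eq_abs]; exact abs_of_pos (by positivity)
  rw [hLinv] at hd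
  have hexp : L / 2 * (L⁻¹ * ‖u‖) ^ 2 = 1 / (2 * L) * ‖u‖ ^ 2 := by
    field_simp
  rw [hexp] at hd
  rw [inner_sub_right]
  have h2 : L⁻¹ * ⟪gradient g a, u⟫ - L⁻¹ * ⟪gradient g b, u⟫ = L⁻¹ * ‖u‖ ^ 2 := by
    rw [← mul_sub, huu]
  have h3 : L⁻¹ * ‖u‖ ^ 2 - 1 / (2 * L) * ‖u‖ ^ 2 = 1 / (2 * L) * ‖u‖ ^ 2 := by
    field_simp; ring
  linarith

lemma cocoercive (g : F → ℝ) (hg : Differentiable ℝ g) (hc : ConvexOn ℝ Set.univ g)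
    (L : ℝ) (hL : 0 < L)
    (hlip : ∀ x y, ‖gradient g x - gradient g y‖ ≤ L * ‖x - y‖) (a b : F) :
    L⁻¹ * ‖gradient g a - gradient g b‖ ^ 2 ≤ ⟪gradient g a - gradient g b, a - b⟫ := by
  have h1 := coco_half g hg hc L hL hlip a b
  have h2 := coco_half g hg hc L hL hlip b a
  have hsym : ‖gradient g b - gradient g a‖ = ‖gradient g a - gradient g b‖ :=
    norm_sub_rev _ _
  rw [hsym] at h2
  have hsum : 1 / (2 * L) * ‖gradient g a - gradient g b‖ ^ 2
      + 1 / (2 * L) * ‖gradient g a - gradient g b‖ ^ 2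
      ≤ - ⟪gradient g b, a - b⟫ - ⟪gradient g a, b - a⟫ := by linarith
  have he : - ⟪gradient g b, a - b⟫ - ⟪gradient g a, b - a⟫
      = ⟪gradient g a - gradient g b, a - b⟫ := by
    rw [inner_sub_left]
    have : (b - a : F) = -(a - b) := by abel
    rw [this, inner_neg_right]
    ring
  rw [he] at hsum
  have : 1 / (2 * L) * ‖gradient g a - gradient g b‖ ^ 2
      + 1 / (2 * L) * ‖gradient g a - gradient g b‖ ^ 2
      = L⁻¹ * ‖gradient g a - gradient g b‖ ^ 2 := by field_simp; ring
  linarith [this ▸ hsum]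

lemma sum_pi_eval {N n : ℕ} (hn : 1 ≤ n) (h : Fin N → ℝ) (j : Fin n) :
    ∑ s : Fin n → Fin N, h (s j) = (N : ℝ) ^ (n - 1) * ∑ i, h i := by
  rw [Fintype.sum_equiv (Equiv.piSplitAt j (fun _ : Fin n => Fin N))
    (fun s : Fin n → Fin N => h (s j)) (fun p => h p.1)
    (fun s => by simp [Equiv.piSplitAt_apply])]
  rw [Fintype.sum_prod_type]
  have hcard : (Fintype.card ({k : Fin n // k ≠ j} → Fin N) : ℝ) = (N : ℝ) ^ (n - 1) := by
    rw [Fintype.card_fun]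
    have hc : Fintype.card {k : Fin n // k ≠ j} = n - 1 := by
      have h1 := Fintype.card_subtype_compl (fun k : Fin n => k = j)
      simp only [Fintype.card_subtype_eq, Fintype.card_fin] at h1
      convert h1 using 2
    rw [hc, Fintype.card_fin]
    push_cast
    rfl
  calc ∑ i, ∑ _r : {k : Fin n // k ≠ j} → Fin N, h i
      = ∑ i, (Fintype.card ({k : Fin n // k ≠ j} → Fin N) : ℝ) * h i := by
        apply Finset.sum_congr rfl; intro i _
        rw [Finset.sum_const, Finset.card_univ, nsmul_eq_mul]
    _ = (N : ℝ) ^ (n - 1) * ∑ i, h i := by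
        rw [Finset.mul_sum]
        apply Finset.sum_congr rfl; intro i _
        rw [hcard]

lemma grad_avg {N : ℕ} (f : Fin N → F → ℝ) (hdiff : ∀ i, Differentiable ℝ (f i)) (p : F) :
    HasGradientAt (fun z => (N : ℝ)⁻¹ * ∑ i, f i z)
      ((N : ℝ)⁻¹ • ∑ i, gradient (f i) p) p := by
  rw [hasGradientAt_iff_hasFDerivAt]
  have hsum : HasFDerivAt (fun z => ∑ i, f i z) (∑ i, fderiv ℝ (f i) p) p :=
    HasFDerivAt.fun_sum (fun i _ => (hdiff i p).hasFDerivAt)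
  have h2 := hsum.const_mul ((N : ℝ)⁻¹)
  have hfd : ∀ i, fderiv ℝ (f i) p = InnerProductSpace.toDual ℝ F (gradient (f i) p) := by
    intro i
    have h3 : HasGradientAt (f i) (gradient (f i) p) p := (hdiff i p).hasGradientAt
    rw [hasGradientAt_iff_hasFDerivAt] at h3
    exact h3.fderiv
  have key : (InnerProductSpace.toDual ℝ F) ((N : ℝ)⁻¹ • ∑ i, gradient (f i) p)
      = (N : ℝ)⁻¹ • ∑ i, fderiv ℝ (f i) p := by
    rw [map_smul, map_sum]
    congr 1
    exact Finset.sum_congr rfl fun i _ => (hfd i).symm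
  rw [key]
  exact h2

end Helpers

/-- One-step contraction for GraDS. -/
theorem grads_one_step
    (d N n : ℕ) (hN : 1 ≤ N) (hn : 1 ≤ n)
    (f : Fin N → EuclideanSpace ℝ (Fin d) → ℝ)
    (hdiff : ∀ i, Differentiable ℝ (f i))
    (hconv : ∀ i, ConvexOn ℝ Set.univ (f i))
    (L : ℝ) (hL : 0 < L)
    (hsmooth : ∀ i (x y : EuclideanSpace ℝ (Fin d)),
      ‖gradient (f i) x - gradient (f i) y‖ ≤ L * ‖x - y‖)
    (μ : ℝ) (hμ : 0 < μ)
    (xstar : EuclideanSpace ℝ (Fin d))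
    (hsc : ∀ x y : EuclideanSpace ℝ (Fin d),
      (N : ℝ)⁻¹ * ∑ i, f i x
        + ⟪gradient (fun z => (N : ℝ)⁻¹ * ∑ i, f i z) x, y - x⟫
        + μ / 2 * ‖y - x‖ ^ 2 ≤ (N : ℝ)⁻¹ * ∑ i, f i y)
    (hmin : ∀ y, (N : ℝ)⁻¹ * ∑ i, f i xstar ≤ (N : ℝ)⁻¹ * ∑ i, f i y)
    (H : (Fin n → Fin N) → EuclideanSpace ℝ (Fin d) → EuclideanSpace ℝ (Fin d))
    (hH : ∀ s x, H s x
      = (n : ℝ)⁻¹ • ∑ j, (gradient (f (s j)) x - gradient (f (s j)) xstar))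
    (γ : (Fin n → Fin N) → EuclideanSpace ℝ (Fin d) → ℝ)
    (hγ : ∀ s x, γ s x
      = ((n : ℝ)⁻¹ * ∑ j, ‖gradient (f (s j)) x - gradient (f (s j)) xstar‖ ^ 2)
          / ‖H s x‖ ^ 2)
    (x : EuclideanSpace ℝ (Fin d))
    (hHne : ∀ s, H s x ≠ 0)
    (γmin : ℝ) (hγmin : 0 < γmin) (hμγ : μ * γmin ≤ L)
    (hlb : ∀ s, γmin ≤ γ s x) :
    ((N : ℝ) ^ n)⁻¹ * ∑ s : Fin n → Fin N, ‖x - (L⁻¹ * γ s x) • H s x - xstar‖ ^ 2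
      ≤ (1 - γmin * μ / L) * ‖x - xstar‖ ^ 2 := by
  have hNpos : (0:ℝ) < N := by exact_mod_cast hN
  have hnpos : (0:ℝ) < n := by exact_mod_cast hn
  set X : EuclideanSpace ℝ (Fin d) := x - xstar with hX
  set g : Fin N → EuclideanSpace ℝ (Fin d) :=
    fun i => gradient (f i) x - gradient (f i) xstar with hgdef
  have hcoco : ∀ i, L⁻¹ * ‖g i‖ ^ 2 ≤ ⟪g i, X⟫ := fun i =>
    cocoercive (f i) (hdiff i) (hconv i) L hL (hsmooth i) x xstar
  have hHin : ∀ s, ⟪H s x, X⟫ = (n : ℝ)⁻¹ * ∑ j, ⟪g (s j), X⟫ := by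
    intro s
    rw [hH s x, real_inner_smul_left, sum_inner]
  have hkey : ∀ s, L⁻¹ * (γ s x * ‖H s x‖ ^ 2) ≤ ⟪H s x, X⟫ := by
    intro s
    have hne : ‖H s x‖ ^ 2 ≠ 0 := pow_ne_zero _ (norm_ne_zero_iff.2 (hHne s))
    have hγs : γ s x * ‖H s x‖ ^ 2 = (n : ℝ)⁻¹ * ∑ j, ‖g (s j)‖ ^ 2 := by
      rw [hγ s x, div_mul_cancel₀ _ hne]
    rw [hγs, hHin s]
    calc L⁻¹ * ((n : ℝ)⁻¹ * ∑ j, ‖g (s j)‖ ^ 2)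
        = (n : ℝ)⁻¹ * ∑ j, L⁻¹ * ‖g (s j)‖ ^ 2 := by
          rw [← mul_assoc, mul_comm L⁻¹ (n:ℝ)⁻¹, mul_assoc, Finset.mul_sum]
      _ ≤ (n : ℝ)⁻¹ * ∑ j, ⟪g (s j), X⟫ :=
          mul_le_mul_of_nonneg_left
            (Finset.sum_le_sum fun j _ => hcoco (s j)) (by positivity)
  have hγpos : ∀ s, 0 < γ s x := fun s => lt_of_lt_of_le hγmin (hlb s)
  have hHX : ∀ s, 0 ≤ ⟪H s x, X⟫ := by
    intro s
    refine le_trans ?_ (hkey s)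
    exact mul_nonneg (inv_nonneg.2 hL.le)
      (mul_nonneg (hγpos s).le (sq_nonneg _))
  have hper : ∀ s, ‖x - (L⁻¹ * γ s x) • H s x - xstar‖ ^ 2
      ≤ ‖X‖ ^ 2 - (γmin / L) * ⟪H s x, X⟫ := by
    intro s
    have heq : x - (L⁻¹ * γ s x) • H s x - xstar = X - (L⁻¹ * γ s x) • H s x := by
      rw [hX]; abel
    rw [heq, norm_sub_sq_real]
    have h1 : ⟪X, (L⁻¹ * γ s x) • H s x⟫ = (L⁻¹ * γ s x) * ⟪H s x, X⟫ := by
      rw [real_inner_smul_right, real_inner_comm]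
    have h2 : ‖(L⁻¹ * γ s x) • H s x‖ ^ 2 = (L⁻¹ * γ s x) ^ 2 * ‖H s x‖ ^ 2 := by
      rw [norm_smul, mul_pow, Real.norm_eq_abs, sq_abs]
    have h3 : (L⁻¹ * γ s x) ^ 2 * ‖H s x‖ ^ 2 ≤ (L⁻¹ * γ s x) * ⟪H s x, X⟫ := by
      have hc : 0 ≤ L⁻¹ * γ s x := mul_nonneg (inv_nonneg.2 hL.le) (hγpos s).le
      calc (L⁻¹ * γ s x) ^ 2 * ‖H s x‖ ^ 2
          = (L⁻¹ * γ s x) * (L⁻¹ * (γ s x * ‖H s x‖ ^ 2)) := by ring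
        _ ≤ (L⁻¹ * γ s x) * ⟪H s x, X⟫ := mul_le_mul_of_nonneg_left (hkey s) hc
    have h4 : (γmin / L) * ⟪H s x, X⟫ ≤ (L⁻¹ * γ s x) * ⟪H s x, X⟫ := by
      apply mul_le_mul_of_nonneg_right _ (hHX s)
      rw [div_eq_mul_inv, mul_comm γmin L⁻¹]
      exact mul_le_mul_of_nonneg_left (hlb s) (by positivity)
    rw [h1, h2]
    linarith
  -- sum of inner products over minibatches
  have hsum : ∑ s : Fin n → Fin N, ⟪H s x, X⟫
      = (N : ℝ) ^ (n - 1) * ∑ i, ⟪g i, X⟫ := by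
    calc ∑ s : Fin n → Fin N, ⟪H s x, X⟫
        = ∑ s : Fin n → Fin N, (n : ℝ)⁻¹ * ∑ j, ⟪g (s j), X⟫ :=
          Finset.sum_congr rfl fun s _ => hHin s
      _ = (n : ℝ)⁻¹ * ∑ j : Fin n, ∑ s : Fin n → Fin N, ⟪g (s j), X⟫ := by
          rw [← Finset.mul_sum, Finset.sum_comm]
      _ = (n : ℝ)⁻¹ * ∑ _j : Fin n, (N : ℝ) ^ (n - 1) * ∑ i, ⟪g i, X⟫ := by
          congr 1
          exact Finset.sum_congr rfl fun j _ => sum_pi_eval hn (fun i => ⟪g i, X⟫) j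
      _ = (N : ℝ) ^ (n - 1) * ∑ i, ⟪g i, X⟫ := by
          rw [Finset.sum_const, Finset.card_univ, Fintype.card_fin, nsmul_eq_mul,
            ← mul_assoc, inv_mul_cancel₀ (ne_of_gt hnpos), one_mul]
  -- strong convexity of f gives lower bound on the average inner product
  have hμX : (N : ℝ) * (μ * ‖X‖ ^ 2) ≤ ∑ i, ⟪g i, X⟫ := by
    have hFg : ∀ p, gradient (fun z => (N : ℝ)⁻¹ * ∑ i, f i z) p
        = (N : ℝ)⁻¹ • ∑ i, gradient (f i) p := fun p => (grad_avg f hdiff p).gradient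
    have hsc1 := hsc x xstar
    have hsc2 := hsc xstar x
    rw [hFg] at hsc1 hsc2
    have hnorm : ‖xstar - x‖ = ‖X‖ := by rw [hX, norm_sub_rev]
    have hxs : xstar - x = -X := by rw [hX]; abel
    rw [hnorm, hxs, inner_neg_right] at hsc1
    have hxx : x - xstar = X := hX.symm
    rw [hxx] at hsc2
    have hadd : μ * ‖X‖ ^ 2
        ≤ ⟪(N : ℝ)⁻¹ • ∑ i, gradient (f i) x, X⟫
          - ⟪(N : ℝ)⁻¹ • ∑ i, gradient (f i) xstar, X⟫ := by linarith
    have hg2 : ⟪(N : ℝ)⁻¹ • ∑ i, gradient (f i) x, X⟫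
          - ⟪(N : ℝ)⁻¹ • ∑ i, gradient (f i) xstar, X⟫
        = (N : ℝ)⁻¹ * ∑ i, ⟪g i, X⟫ := by
      rw [real_inner_smul_left, real_inner_smul_left, ← mul_sub, ← inner_sub_left,
        ← Finset.sum_sub_distrib]
      rw [← sum_inner]
    rw [hg2] at hadd
    calc (N : ℝ) * (μ * ‖X‖ ^ 2) ≤ (N : ℝ) * ((N : ℝ)⁻¹ * ∑ i, ⟪g i, X⟫) :=
          mul_le_mul_of_nonneg_left hadd hNpos.le
      _ = ∑ i, ⟪g i, X⟫ := by
          rw [← mul_assoc, mul_inv_cancel₀ (ne_of_gt hNpos), one_mul]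
  -- put everything together
  have hpow : (N : ℝ) ^ (n - 1) * (N : ℝ) = (N : ℝ) ^ n := by
    rw [← pow_succ]
    congr 1
    omega
  have hPpos : (0:ℝ) < (N : ℝ) ^ n := by positivity
  have hstep : ∑ s : Fin n → Fin N, ‖x - (L⁻¹ * γ s x) • H s x - xstar‖ ^ 2
      ≤ (N : ℝ) ^ n * ‖X‖ ^ 2 - (γmin / L) * ((N : ℝ) ^ n * (μ * ‖X‖ ^ 2)) := by
    calc ∑ s : Fin n → Fin N, ‖x - (L⁻¹ * γ s x) • H s x - xstar‖ ^ 2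
        ≤ ∑ s : Fin n → Fin N, (‖X‖ ^ 2 - (γmin / L) * ⟪H s x, X⟫) :=
          Finset.sum_le_sum fun s _ => hper s
      _ = (N : ℝ) ^ n * ‖X‖ ^ 2
          - (γmin / L) * ∑ s : Fin n → Fin N, ⟪H s x, X⟫ := by
          rw [Finset.sum_sub_distrib, Finset.sum_const, Finset.card_univ, Fintype.card_pi]
          simp [Finset.prod_const, nsmul_eq_mul, Finset.mul_sum]
      _ ≤ (N : ℝ) ^ n * ‖X‖ ^ 2 - (γmin / L) * ((N : ℝ) ^ n * (μ * ‖X‖ ^ 2)) := by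
          have h5 : (N : ℝ) ^ n * (μ * ‖X‖ ^ 2)
              ≤ ∑ s : Fin n → Fin N, ⟪H s x, X⟫ := by
            rw [hsum, ← hpow]
            calc (N : ℝ) ^ (n - 1) * (N : ℝ) * (μ * ‖X‖ ^ 2)
                = (N : ℝ) ^ (n - 1) * ((N : ℝ) * (μ * ‖X‖ ^ 2)) := by ring
              _ ≤ (N : ℝ) ^ (n - 1) * ∑ i, ⟪g i, X⟫ :=
                  mul_le_mul_of_nonneg_left hμX (by positivity)
          have hgl : 0 ≤ γmin / L := by positivity
          nlinarith [mul_le_mul_of_nonneg_left h5 hgl]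
  have hXx : ‖x - xstar‖ = ‖X‖ := by rw [hX]
  rw [hXx]
  calc ((N : ℝ) ^ n)⁻¹ * ∑ s : Fin n → Fin N, ‖x - (L⁻¹ * γ s x) • H s x - xstar‖ ^ 2
      ≤ ((N : ℝ) ^ n)⁻¹
          * ((N : ℝ) ^ n * ‖X‖ ^ 2 - (γmin / L) * ((N : ℝ) ^ n * (μ * ‖X‖ ^ 2))) :=
        mul_le_mul_of_nonneg_left hstep (by positivity)
    _ = (1 - γmin * μ / L) * ‖X‖ ^ 2 := by
        field_simp
end

section
/- (Theorem 3, StoP with a constant cap: linear convergence to a neighbourhood.) Assume each f_i is differentiable and convex, f is μ-strongly convex with minimizer x*, and ℓ_i ≤ f_i(y) for all y ∈ E and all i; set σ² = (1/N)·∑_i (f_i(x*) − ℓ_i). Fix a cap Γ > 0 and define γ_s(x) = min{Γ, 2·(1/n)·∑_j (f_{s(j)}(x) − ℓ_{s(j)}) / ‖ḡ_s(x)‖²}. Assume ḡ_s(x) ≠ 0 for all x ≠ x* and all minibatches s, and that γmin > 0 satisfies μ·γmin ≤ 1 and γ_s(x) ≥ γmin for all x ≠ x* and all s. Fix x^0 and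 for each sequence of minibatches define x^{k+1} = x^k − γ_{s^k}(x^k)·ḡ_{s^k}(x^k) (leaving x^k unchanged when ḡ_{s^k}(x^k) = 0). Then the average over all N^{nK} sequences of minibatches of ‖x^K − x*‖² is at most (1 − μ·γmin)^K·‖x^0 − x*‖² + 2·Γ·σ²/(μ·γmin). -/
open scoped BigOperators RealInnerProductSpace

lemma inner_gradient_eq_fderiv {d : ℕ} (φ : EuclideanSpace ℝ (Fin d) → ℝ)
    (x v : EuclideanSpace ℝ (Fin d)) :
    ⟪gradient φ x, v⟫ = fderiv ℝ φ x v := by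
  rw [gradient]
  exact InnerProductSpace.toDual_symm_apply

lemma convexOn_grad_le {d : ℕ} {φ : EuclideanSpace ℝ (Fin d) → ℝ}
    (hφ : Differentiable ℝ φ) (hc : ConvexOn ℝ Set.univ φ)
    (x y : EuclideanSpace ℝ (Fin d)) :
    ⟪gradient φ x, y - x⟫ ≤ φ y - φ x := by
  set q : ℝ → ℝ := fun t => φ (x + t • (y - x)) with hqdef
  have hmap : HasDerivAt (fun t : ℝ => x + t • (y - x)) (y - x) 0 := by
    simpa using ((hasDerivAt_id (0:ℝ)).smul_const (y - x)).const_add x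
  have hq : HasDerivAt q (fderiv ℝ φ x (y - x)) 0 := by
    have hφ' : HasFDerivAt φ (fderiv ℝ φ x) ((fun t : ℝ => x + t • (y - x)) 0) := by
      simpa using (hφ x).hasFDerivAt
    exact hφ'.comp_hasDerivAt (0:ℝ) hmap
  have hqc : ConvexOn ℝ Set.univ q := by
    have := hc.comp_affineMap (AffineMap.lineMap x y : ℝ →ᵃ[ℝ] EuclideanSpace ℝ (Fin d))
    have heq : q = (φ ∘ (AffineMap.lineMap x y : ℝ →ᵃ[ℝ] EuclideanSpace ℝ (Fin d))) := by
      funext t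
      simp [hqdef, AffineMap.lineMap_apply, add_comm]
    rw [heq]
    simpa using this
  have hs := hqc.le_slope_of_hasDerivAt (Set.mem_univ (0:ℝ)) (Set.mem_univ (1:ℝ))
    zero_lt_one hq
  have hslope : slope q 0 1 = φ y - φ x := by
    simp [slope, hqdef]
  rw [inner_gradient_eq_fderiv]
  rw [hslope] at hs
  exact hs

lemma sum_minibatch_avg {N n : ℕ} (hN : 1 ≤ N) (hn : 1 ≤ n) (h : Fin N → ℝ) :
    ∑ s : Fin n → Fin N, (n : ℝ)⁻¹ * ∑ j, h (s j)
      = (N : ℝ) ^ n * ((N : ℝ)⁻¹ * ∑ i, h i) := by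
  have key : ∀ j : Fin n, ∑ s : Fin n → Fin N, h (s j) = (N:ℝ)^(n-1) * ∑ i, h i := by
    intro j
    have e := Fintype.sum_equiv (Equiv.funSplitAt j (Fin N))
      (fun s => h (s j)) (fun p => h p.1) (fun s => by simp)
    rw [e, Fintype.sum_prod_type]
    have hcard : (Fintype.card ({ j' // j' ≠ j } → Fin N)) = N ^ (n-1) := by
      rw [Fintype.card_fun, Fintype.card_fin]
      congr 1
      simp [Fintype.card_subtype_compl]
    simp only [Finset.sum_const, Finset.card_univ, hcard, nsmul_eq_mul]
    push_cast
    rw [← Finset.mul_sum]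
  calc ∑ s : Fin n → Fin N, (n : ℝ)⁻¹ * ∑ j, h (s j)
      = (n:ℝ)⁻¹ * ∑ j : Fin n, ∑ s : Fin n → Fin N, h (s j) := by
        rw [← Finset.mul_sum, Finset.sum_comm]
    _ = (n:ℝ)⁻¹ * ((n:ℝ) * ((N:ℝ)^(n-1) * ∑ i, h i)) := by
        rw [Finset.sum_congr rfl (fun j _ => key j)]
        simp [Finset.sum_const, mul_assoc]
    _ = (N : ℝ) ^ n * ((N : ℝ)⁻¹ * ∑ i, h i) := by
        have hn0 : (n:ℝ) ≠ 0 := by positivity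
        have hN0 : (N:ℝ) ≠ 0 := by positivity
        rw [← mul_assoc, inv_mul_cancel₀ hn0, one_mul]
        rw [← mul_assoc ((N:ℝ)^n), mul_comm ((N:ℝ)^n)]
        congr 2
        have : n = (n - 1) + 1 := (Nat.succ_pred_eq_of_pos hn).symm
        rw [this, pow_succ]
        field_simp
        simp

set_option maxHeartbeats 1600000 in
/-- Theorem 3 (StoP with a constant cap): linear convergence to a neighbourhood. -/
theorem stop_K_step
    (d N n K : ℕ) (hN : 1 ≤ N) (hn : 1 ≤ n)
    (f : Fin N → EuclideanSpace ℝ (Fin d) → ℝ)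
    (hdiff : ∀ i, Differentiable ℝ (f i))
    (hconv : ∀ i, ConvexOn ℝ Set.univ (f i))
    (μ : ℝ) (hμ : 0 < μ)
    (xstar : EuclideanSpace ℝ (Fin d))
    (hsc : ∀ x y : EuclideanSpace ℝ (Fin d),
      (N : ℝ)⁻¹ * ∑ i, f i x
        + ⟪gradient (fun z => (N : ℝ)⁻¹ * ∑ i, f i z) x, y - x⟫
        + μ / 2 * ‖y - x‖ ^ 2 ≤ (N : ℝ)⁻¹ * ∑ i, f i y)
    (hmin : ∀ y, (N : ℝ)⁻¹ * ∑ i, f i xstar ≤ (N : ℝ)⁻¹ * ∑ i, f i y)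
    (ℓ : Fin N → ℝ) (hℓ : ∀ i (y : EuclideanSpace ℝ (Fin d)), ℓ i ≤ f i y)
    (σ2 : ℝ) (hσ2 : σ2 = (N : ℝ)⁻¹ * ∑ i, (f i xstar - ℓ i))
    (Γ : ℝ) (hΓ : 0 < Γ)
    (g : (Fin n → Fin N) → EuclideanSpace ℝ (Fin d) → EuclideanSpace ℝ (Fin d))
    (hg : ∀ s x, g s x = (n : ℝ)⁻¹ • ∑ j, gradient (f (s j)) x)
    (γ : (Fin n → Fin N) → EuclideanSpace ℝ (Fin d) → ℝ)
    (hγ : ∀ s x, γ s x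
      = min Γ (2 * ((n : ℝ)⁻¹ * ∑ j, (f (s j) x - ℓ (s j))) / ‖g s x‖ ^ 2))
    (hgne : ∀ x, x ≠ xstar → ∀ s, g s x ≠ 0)
    (γmin : ℝ) (hγmin : 0 < γmin) (hμγ : μ * γmin ≤ 1)
    (hlb : ∀ x, x ≠ xstar → ∀ s, γmin ≤ γ s x)
    (x0 : EuclideanSpace ℝ (Fin d))
    (X : (Fin K → Fin n → Fin N) → ℕ → EuclideanSpace ℝ (Fin d))
    (hX0 : ∀ S, X S 0 = x0)
    (hXstep : ∀ S (k : Fin K),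
      X S (k.val + 1)
        = X S k.val - γ (S k) (X S k.val) • g (S k) (X S k.val)) :
    (((N : ℝ) ^ n) ^ K)⁻¹ * ∑ S : Fin K → Fin n → Fin N, ‖X S K - xstar‖ ^ 2
      ≤ (1 - μ * γmin) ^ K * ‖x0 - xstar‖ ^ 2 + 2 * Γ * σ2 / (μ * γmin) := by
  classical
  set B : (Fin n → Fin N) → EuclideanSpace ℝ (Fin d) → ℝ :=
    fun s x => (n : ℝ)⁻¹ * ∑ j, (f (s j) x - ℓ (s j)) with hBdef
  have hB0 : ∀ s x, 0 ≤ B s x := by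
    intro s x
    apply mul_nonneg (by positivity)
    exact Finset.sum_nonneg fun j _ => sub_nonneg.2 (hℓ (s j) x)
  -- basic facts about the step size
  have hγle : ∀ s x, γ s x ≤ Γ := by
    intro s x; rw [hγ]; exact min_le_left _ _
  have hγ0 : ∀ s x, 0 ≤ γ s x := by
    intro s x; rw [hγ]
    refine le_min hΓ.le (div_nonneg ?_ (sq_nonneg _))
    have := hB0 s x
    rw [hBdef] at this
    nlinarith [this]
  have hγn : ∀ s x, γ s x * ‖g s x‖ ^ 2 ≤ 2 * B s x := by
    intro s x
    by_cases hg0 : g s x = 0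
    · simp [hg0]
      nlinarith [hB0 s x]
    · have hpos : 0 < ‖g s x‖ ^ 2 := by
        have h := norm_pos_iff.mpr hg0
        positivity
      have h1 : γ s x ≤ 2 * B s x / ‖g s x‖ ^ 2 := by
        rw [hγ]; exact min_le_right _ _
      calc γ s x * ‖g s x‖ ^ 2 ≤ (2 * B s x / ‖g s x‖ ^ 2) * ‖g s x‖ ^ 2 :=
            mul_le_mul_of_nonneg_right h1 hpos.le
        _ = 2 * B s x := by field_simp
  -- convexity inequality for minibatch gradients
  have hconvs : ∀ s (x : EuclideanSpace ℝ (Fin d)), B s x - B s xstar ≤ ⟪g s x, x - xstar⟫ := by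
    intro s x
    have hip : ⟪g s x, x - xstar⟫
        = (n : ℝ)⁻¹ * ∑ j, ⟪gradient (f (s j)) x, x - xstar⟫ := by
      rw [hg, real_inner_smul_left, sum_inner]
    rw [hip, hBdef]
    simp only
    rw [← mul_sub, ← Finset.sum_sub_distrib]
    apply mul_le_mul_of_nonneg_left _ (by positivity)
    apply Finset.sum_le_sum
    intro j _
    have h1 := convexOn_grad_le (hdiff (s j)) (hconv (s j)) x xstar
    have h2 : ⟪gradient (f (s j)) x, x - xstar⟫
        = -⟪gradient (f (s j)) x, xstar - x⟫ := by
      rw [← inner_neg_right, neg_sub]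
    linarith [h1, h2.ge]
  -- per-sample one step inequality
  have step1 : ∀ s (x : EuclideanSpace ℝ (Fin d)),
      ‖x - γ s x • g s x - xstar‖ ^ 2
        ≤ ‖x - xstar‖ ^ 2 - 2 * γmin * ⟪g s x, x - xstar⟫
          + 2 * γmin * B s x + 2 * (Γ - γmin) * B s xstar := by
    intro s x
    have hexp : ‖x - γ s x • g s x - xstar‖ ^ 2
        = ‖x - xstar‖ ^ 2 - 2 * γ s x * ⟪g s x, x - xstar⟫
          + γ s x ^ 2 * ‖g s x‖ ^ 2 := by
      have h0 : x - γ s x • g s x - xstar = (x - xstar) - γ s x • g s x := by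
        abel
      rw [h0, norm_sub_sq_real, real_inner_smul_right, norm_smul, Real.norm_eq_abs,
        mul_pow, sq_abs, real_inner_comm (x - xstar) (g s x)]
      ring
    rw [hexp]
    by_cases hx : x = xstar
    · rw [hx]
      have hin : ⟪g s xstar, xstar - xstar⟫ = 0 := by simp
      rw [hin]
      nlinarith [mul_le_mul_of_nonneg_left (hγn s xstar) (hγ0 s xstar),
        mul_le_mul_of_nonneg_right (hγle s xstar) (hB0 s xstar), hγ0 s xstar,
        hB0 s xstar]
    · have hmin' : γmin ≤ γ s x := hlb x hx s
      have P1 : 0 ≤ (γ s x - γmin) * (⟪g s x, x - xstar⟫ - (B s x - B s xstar)) :=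
        mul_nonneg (by linarith) (by linarith [hconvs s x])
      have P2 : 0 ≤ (Γ - γ s x) * B s xstar :=
        mul_nonneg (by linarith [hγle s x]) (hB0 s xstar)
      have P3 : 0 ≤ γ s x * (2 * B s x - γ s x * ‖g s x‖ ^ 2) :=
        mul_nonneg (hγ0 s x) (by linarith [hγn s x])
      nlinarith [P1, P2, P3]
  -- expectation over one minibatch
  have hNpos : (0:ℝ) < (N:ℝ) := by exact_mod_cast hN
  have hσ2nn : 0 ≤ σ2 := by
    rw [hσ2]
    exact mul_nonneg (by positivity)
      (Finset.sum_nonneg fun i _ => sub_nonneg.2 (hℓ i xstar))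
  have stepE : ∀ x : EuclideanSpace ℝ (Fin d),
      ∑ s : Fin n → Fin N, ‖x - γ s x • g s x - xstar‖ ^ 2
        ≤ (N:ℝ) ^ n * ((1 - μ * γmin) * ‖x - xstar‖ ^ 2 + 2 * Γ * σ2) := by
    intro x
    have hip : ∑ s : Fin n → Fin N, ⟪g s x, x - xstar⟫
        = (N:ℝ) ^ n * ((N:ℝ)⁻¹ * ∑ i, ⟪gradient (f i) x, x - xstar⟫) := by
      rw [← sum_minibatch_avg hN hn (fun i => ⟪gradient (f i) x, x - xstar⟫)]
      apply Finset.sum_congr rfl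
      intro s _
      rw [hg, real_inner_smul_left, sum_inner]
    have hBsum : ∑ s : Fin n → Fin N, B s x
        = (N:ℝ) ^ n * ((N:ℝ)⁻¹ * ∑ i, (f i x - ℓ i)) :=
      sum_minibatch_avg hN hn (fun i => f i x - ℓ i)
    have hCsum : ∑ s : Fin n → Fin N, B s xstar = (N:ℝ) ^ n * σ2 := by
      rw [hσ2]; exact sum_minibatch_avg hN hn (fun i => f i xstar - ℓ i)
    -- gradient of the average
    have hF : HasFDerivAt (fun z => (N:ℝ)⁻¹ * ∑ i, f i z)
        ((N:ℝ)⁻¹ • ∑ i, fderiv ℝ (f i) x) x := by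
      have hsum : HasFDerivAt (fun z => ∑ i, f i z)
          (∑ i, fderiv ℝ (f i) x) x :=
        HasFDerivAt.fun_sum (fun i _ => (hdiff i x).hasFDerivAt)
      exact hsum.const_mul ((N:ℝ)⁻¹)
    have hGrad : (N:ℝ)⁻¹ * ∑ i, ⟪gradient (f i) x, x - xstar⟫
        = ⟪gradient (fun z => (N:ℝ)⁻¹ * ∑ i, f i z) x, x - xstar⟫ := by
      rw [inner_gradient_eq_fderiv, hF.fderiv]
      simp only [ContinuousLinearMap.coe_smul', Pi.smul_apply,
        ContinuousLinearMap.coe_sum', Finset.sum_apply, smul_eq_mul]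
      congr 1
      apply Finset.sum_congr rfl
      intro i _
      rw [inner_gradient_eq_fderiv]
    -- the key scalar inequality
    have hscx := hsc x xstar
    have hflip : ⟪gradient (fun z => (N:ℝ)⁻¹ * ∑ i, f i z) x, xstar - x⟫
        = -⟪gradient (fun z => (N:ℝ)⁻¹ * ∑ i, f i z) x, x - xstar⟫ := by
      rw [← inner_neg_right, neg_sub]
    have hnorm : ‖xstar - x‖ = ‖x - xstar‖ := norm_sub_rev _ _
    rw [hflip, hnorm] at hscx
    have hsplit1 : (N:ℝ)⁻¹ * ∑ i, (f i x - ℓ i)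
        = (N:ℝ)⁻¹ * ∑ i, f i x - (N:ℝ)⁻¹ * ∑ i, ℓ i := by
      rw [Finset.sum_sub_distrib, mul_sub]
    have hsplit2 : σ2 = (N:ℝ)⁻¹ * ∑ i, f i xstar - (N:ℝ)⁻¹ * ∑ i, ℓ i := by
      rw [hσ2, Finset.sum_sub_distrib, mul_sub]
    set IP := ⟪gradient (fun z => (N:ℝ)⁻¹ * ∑ i, f i z) x, x - xstar⟫ with hIP
    have claim : ‖x - xstar‖ ^ 2 - 2 * γmin * IP
        + 2 * γmin * ((N:ℝ)⁻¹ * ∑ i, (f i x - ℓ i)) + 2 * (Γ - γmin) * σ2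
        ≤ (1 - μ * γmin) * ‖x - xstar‖ ^ 2 + 2 * Γ * σ2 := by
      nlinarith [mul_le_mul_of_nonneg_left hscx (by positivity : (0:ℝ) ≤ 2 * γmin)]
    calc ∑ s : Fin n → Fin N, ‖x - γ s x • g s x - xstar‖ ^ 2
        ≤ ∑ s : Fin n → Fin N, (‖x - xstar‖ ^ 2 - 2 * γmin * ⟪g s x, x - xstar⟫
            + 2 * γmin * B s x + 2 * (Γ - γmin) * B s xstar) :=
          Finset.sum_le_sum fun s _ => step1 s x
      _ = (N:ℝ) ^ n * (‖x - xstar‖ ^ 2 - 2 * γmin * IP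
            + 2 * γmin * ((N:ℝ)⁻¹ * ∑ i, (f i x - ℓ i)) + 2 * (Γ - γmin) * σ2) := by
          have hsum1 : ∑ s : Fin n → Fin N, (‖x - xstar‖ ^ 2
              - 2 * γmin * ⟪g s x, x - xstar⟫
              + 2 * γmin * B s x + 2 * (Γ - γmin) * B s xstar)
            = (N:ℝ) ^ n * ‖x - xstar‖ ^ 2
              - 2 * γmin * ∑ s : Fin n → Fin N, ⟪g s x, x - xstar⟫
              + 2 * γmin * ∑ s : Fin n → Fin N, B s x
              + 2 * (Γ - γmin) * ∑ s : Fin n → Fin N, B s xstar := by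
            rw [Finset.sum_add_distrib, Finset.sum_add_distrib, Finset.sum_sub_distrib,
              Finset.sum_const, Finset.card_univ]
            simp only [Fintype.card_fun, Fintype.card_fin, nsmul_eq_mul, Finset.mul_sum]
            push_cast
            ring
          rw [hsum1, hip, hBsum, hCsum, ← hGrad]
          ring
      _ ≤ (N:ℝ) ^ n * ((1 - μ * γmin) * ‖x - xstar‖ ^ 2 + 2 * Γ * σ2) := by
          apply mul_le_mul_of_nonneg_left claim (by positivity)
  -- X depends only on the prefix of the minibatch sequence
  have hdep : ∀ k, k ≤ K → ∀ S S' : Fin K → Fin n → Fin N,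
      (∀ j : Fin K, (j : ℕ) < k → S j = S' j) → X S k = X S' k := by
    intro k
    induction k with
    | zero => intro _ S S' _; rw [hX0, hX0]
    | succ k ih =>
      intro hk S S' hag
      have hkK : k < K := hk
      have hx : X S k = X S' k :=
        ih hkK.le S S' (fun j hj => hag j (Nat.lt_succ_of_lt hj))
      have hs : S ⟨k, hkK⟩ = S' ⟨k, hkK⟩ := hag ⟨k, hkK⟩ (Nat.lt_succ_self k)
      have e1 : X S (k+1) = X S k - γ (S ⟨k, hkK⟩) (X S k) • g (S ⟨k, hkK⟩) (X S k) :=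
        hXstep S ⟨k, hkK⟩
      have e2 : X S' (k+1) = X S' k - γ (S' ⟨k, hkK⟩) (X S' k) • g (S' ⟨k, hkK⟩) (X S' k) :=
        hXstep S' ⟨k, hkK⟩
      rw [e1, e2, hx, hs]
  -- one-step recursion for the sums over all sequences
  set M : ℝ := ((N:ℝ) ^ n) ^ K with hMdef
  have hMpos : (0:ℝ) < M := by positivity
  have hkey : ∀ k, k < K →
      ∑ S : Fin K → Fin n → Fin N, ‖X S (k+1) - xstar‖ ^ 2
        ≤ (1 - μ * γmin) * ∑ S : Fin K → Fin n → Fin N, ‖X S k - xstar‖ ^ 2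
          + M * (2 * Γ * σ2) := by
    intro k hk
    have hY : ∀ t0 t1 : Fin n → Fin N,
        ∀ r : {j // j ≠ (⟨k, hk⟩ : Fin K)} → (Fin n → Fin N),
        X ((Equiv.funSplitAt (⟨k, hk⟩ : Fin K) (Fin n → Fin N)).symm (t0, r)) k
          = X ((Equiv.funSplitAt (⟨k, hk⟩ : Fin K) (Fin n → Fin N)).symm (t1, r)) k := by
      intro t0 t1 r
      apply hdep k hk.le
      intro j hj
      have hji : j ≠ (⟨k, hk⟩ : Fin K) := by
        intro h
        rw [h] at hj
        exact lt_irrefl k hj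
      simp [Equiv.funSplitAt_symm_apply, dif_neg hji]
    set t0 : Fin n → Fin N := fun _ => ⟨0, hN⟩ with ht0
    set Y : ({j // j ≠ (⟨k, hk⟩ : Fin K)} → (Fin n → Fin N)) → EuclideanSpace ℝ (Fin d) :=
      fun r => X ((Equiv.funSplitAt (⟨k, hk⟩ : Fin K) (Fin n → Fin N)).symm (t0, r)) k with hYdef
    have hYe : ∀ p : (Fin n → Fin N) × ({j // j ≠ (⟨k, hk⟩ : Fin K)} → (Fin n → Fin N)),
        X ((Equiv.funSplitAt (⟨k, hk⟩ : Fin K) (Fin n → Fin N)).symm p) k = Y p.2 := by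
      intro p
      rw [hYdef]
      exact hY p.1 t0 p.2
    have h1 : ∑ S : Fin K → Fin n → Fin N, ‖X S (k+1) - xstar‖ ^ 2
        = ∑ p : (Fin n → Fin N) × ({j // j ≠ (⟨k, hk⟩ : Fin K)} → (Fin n → Fin N)),
            ‖Y p.2 - γ p.1 (Y p.2) • g p.1 (Y p.2) - xstar‖ ^ 2 := by
      apply Fintype.sum_equiv (Equiv.funSplitAt (⟨k, hk⟩ : Fin K) (Fin n → Fin N))
      intro S
      have hstep : X S (k+1) = X S k
          - γ (S (⟨k, hk⟩ : Fin K)) (X S k) • g (S (⟨k, hk⟩ : Fin K)) (X S k) :=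
        hXstep S ⟨k, hk⟩
      have hXk : X S k = Y ((Equiv.funSplitAt (⟨k, hk⟩ : Fin K) (Fin n → Fin N)) S).2 := by
        have := hYe ((Equiv.funSplitAt (⟨k, hk⟩ : Fin K) (Fin n → Fin N)) S)
        rw [Equiv.symm_apply_apply] at this
        exact this
      have hSi : S (⟨k, hk⟩ : Fin K)
          = ((Equiv.funSplitAt (⟨k, hk⟩ : Fin K) (Fin n → Fin N)) S).1 := by
        simp
      rw [hstep, hXk, hSi]
    have h2 : ∑ S : Fin K → Fin n → Fin N, ‖X S k - xstar‖ ^ 2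
        = (N:ℝ) ^ n * ∑ r : {j // j ≠ (⟨k, hk⟩ : Fin K)} → (Fin n → Fin N), ‖Y r - xstar‖ ^ 2 := by
      rw [Fintype.sum_equiv (Equiv.funSplitAt (⟨k, hk⟩ : Fin K) (Fin n → Fin N))
        (fun S => ‖X S k - xstar‖ ^ 2)
        (fun p => ‖Y p.2 - xstar‖ ^ 2) (fun S => by
          have hXk : X S k = Y ((Equiv.funSplitAt (⟨k, hk⟩ : Fin K) (Fin n → Fin N)) S).2 := by
            have := hYe ((Equiv.funSplitAt (⟨k, hk⟩ : Fin K) (Fin n → Fin N)) S)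
            rw [Equiv.symm_apply_apply] at this
            exact this
          simp only [hXk])]
      rw [Fintype.sum_prod_type]
      simp only [Finset.sum_const, Finset.card_univ]
      rw [← Finset.sum_nsmul]
      simp only [nsmul_eq_mul, Fintype.card_fun, Fintype.card_fin]
      push_cast
      rw [← Finset.mul_sum]
    have hcardnat : (N ^ n) ^ K
        = N ^ n * Fintype.card ({j // j ≠ (⟨k, hk⟩ : Fin K)} → (Fin n → Fin N)) := by
      have hc1 : Fintype.card (Fin K → Fin n → Fin N)
          = Fintype.card (Fin n → Fin N)
            * Fintype.card ({j // j ≠ (⟨k, hk⟩ : Fin K)} → (Fin n → Fin N)) := by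
        rw [Fintype.card_congr (Equiv.funSplitAt (⟨k, hk⟩ : Fin K) (Fin n → Fin N)),
          Fintype.card_prod]
      have hc2 : Fintype.card (Fin K → Fin n → Fin N) = (N ^ n) ^ K := by
        simp [Fintype.card_fun]
      have hc3 : Fintype.card (Fin n → Fin N) = N ^ n := by
        simp [Fintype.card_fun]
      rw [← hc2, hc1, hc3]
    have hcard : ((Fintype.card ({j // j ≠ (⟨k, hk⟩ : Fin K)} → (Fin n → Fin N))) : ℝ)
        * (N:ℝ) ^ n = M := by
      have h4 : ((N:ℝ) ^ n) ^ K = (N:ℝ) ^ n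
          * ((Fintype.card ({j // j ≠ (⟨k, hk⟩ : Fin K)} → (Fin n → Fin N))) : ℝ) := by
        exact_mod_cast congrArg (Nat.cast (R := ℝ)) hcardnat
      rw [hMdef, h4]
      ring
    calc ∑ S : Fin K → Fin n → Fin N, ‖X S (k+1) - xstar‖ ^ 2
        = ∑ r : {j // j ≠ (⟨k, hk⟩ : Fin K)} → (Fin n → Fin N), ∑ t : Fin n → Fin N,
            ‖Y r - γ t (Y r) • g t (Y r) - xstar‖ ^ 2 := by
          rw [h1, Fintype.sum_prod_type]
          exact Finset.sum_comm
      _ ≤ ∑ r : {j // j ≠ (⟨k, hk⟩ : Fin K)} → (Fin n → Fin N),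
            (N:ℝ) ^ n * ((1 - μ * γmin) * ‖Y r - xstar‖ ^ 2 + 2 * Γ * σ2) :=
          Finset.sum_le_sum fun r _ => stepE (Y r)
      _ = (1 - μ * γmin) * ((N:ℝ) ^ n
              * ∑ r : {j // j ≠ (⟨k, hk⟩ : Fin K)} → (Fin n → Fin N), ‖Y r - xstar‖ ^ 2)
            + ((Fintype.card ({j // j ≠ (⟨k, hk⟩ : Fin K)} → (Fin n → Fin N))) : ℝ)
              * ((N:ℝ) ^ n * (2 * Γ * σ2)) := by
          rw [Finset.sum_congr rfl (fun r _ => by ring :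
            ∀ r ∈ Finset.univ, (N:ℝ) ^ n * ((1 - μ * γmin) * ‖Y r - xstar‖ ^ 2 + 2 * Γ * σ2)
              = (1 - μ * γmin) * ((N:ℝ) ^ n * ‖Y r - xstar‖ ^ 2) + (N:ℝ) ^ n * (2 * Γ * σ2))]
          rw [Finset.sum_add_distrib, Finset.sum_const, Finset.card_univ, nsmul_eq_mul,
            ← Finset.mul_sum, ← Finset.mul_sum]
      _ = (1 - μ * γmin) * ∑ S : Fin K → Fin n → Fin N, ‖X S k - xstar‖ ^ 2
            + M * (2 * Γ * σ2) := by
          rw [← h2, ← mul_assoc, hcard]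
  -- iterate the recursion
  have h1ρ : 0 ≤ 1 - μ * γmin := by linarith
  have hrec : ∀ k, k ≤ K →
      ∑ S : Fin K → Fin n → Fin N, ‖X S k - xstar‖ ^ 2
        ≤ M * ((1 - μ * γmin) ^ k * ‖x0 - xstar‖ ^ 2
            + (∑ j ∈ Finset.range k, (1 - μ * γmin) ^ j) * (2 * Γ * σ2)) := by
    intro k
    induction k with
    | zero =>
      intro _
      simp only [hX0, Finset.sum_const, Finset.card_univ, nsmul_eq_mul, pow_zero,
        Finset.range_zero, Finset.sum_empty, one_mul, zero_mul, add_zero]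
      apply le_of_eq
      rw [hMdef]
      congr 1
      rw [Fintype.card_fun, Fintype.card_fin, Fintype.card_fun, Fintype.card_fin,
        Fintype.card_fin]
      push_cast
      ring
    | succ k ih =>
      intro hk
      have hkK : k < K := hk
      calc ∑ S : Fin K → Fin n → Fin N, ‖X S (k+1) - xstar‖ ^ 2
          ≤ (1 - μ * γmin) * ∑ S : Fin K → Fin n → Fin N, ‖X S k - xstar‖ ^ 2
              + M * (2 * Γ * σ2) := hkey k hkK
        _ ≤ (1 - μ * γmin) * (M * ((1 - μ * γmin) ^ k * ‖x0 - xstar‖ ^ 2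
              + (∑ j ∈ Finset.range k, (1 - μ * γmin) ^ j) * (2 * Γ * σ2)))
              + M * (2 * Γ * σ2) := by
            have := mul_le_mul_of_nonneg_left (ih hkK.le) h1ρ
            linarith
        _ = M * ((1 - μ * γmin) ^ (k+1) * ‖x0 - xstar‖ ^ 2
              + (∑ j ∈ Finset.range (k+1), (1 - μ * γmin) ^ j) * (2 * Γ * σ2)) := by
            rw [geom_sum_succ]
            ring
  -- conclude
  have hρ : 0 < μ * γmin := mul_pos hμ hγmin
  have hgeom : (∑ j ∈ Finset.range K, (1 - μ * γmin) ^ j) * (2 * Γ * σ2)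
      ≤ 2 * Γ * σ2 / (μ * γmin) := by
    have hgs : ∑ j ∈ Finset.range K, (1 - μ * γmin) ^ j ≤ (μ * γmin)⁻¹ := by
      have hmul := geom_sum_mul (1 - μ * γmin) K
      have hpow : 0 ≤ (1 - μ * γmin) ^ K := pow_nonneg h1ρ K
      have hle : (∑ j ∈ Finset.range K, (1 - μ * γmin) ^ j) * (μ * γmin) ≤ 1 := by
        nlinarith [hmul, hpow]
      rw [← one_div, le_div_iff₀ hρ]
      exact hle
    have hc : (0:ℝ) ≤ 2 * Γ * σ2 := by positivity
    calc (∑ j ∈ Finset.range K, (1 - μ * γmin) ^ j) * (2 * Γ * σ2)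
        ≤ (μ * γmin)⁻¹ * (2 * Γ * σ2) := mul_le_mul_of_nonneg_right hgs hc
      _ = 2 * Γ * σ2 / (μ * γmin) := by rw [div_eq_mul_inv]; ring
  have hfin := hrec K le_rfl
  rw [inv_mul_le_iff₀ hMpos]
  calc ∑ S : Fin K → Fin n → Fin N, ‖X S K - xstar‖ ^ 2
      ≤ M * ((1 - μ * γmin) ^ K * ‖x0 - xstar‖ ^ 2
          + (∑ j ∈ Finset.range K, (1 - μ * γmin) ^ j) * (2 * Γ * σ2)) := hfin
    _ ≤ M * ((1 - μ * γmin) ^ K * ‖x0 - xstar‖ ^ 2 + 2 * Γ * σ2 / (μ * γmin)) :=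
        mul_le_mul_of_nonneg_left (add_le_add_right hgeom _) hMpos.le
end
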